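/- arXiv:1303.1829 — 6 statements merged into one kernel-verified Lean document; each statement's English description precedes it below -/
import Mathlib

section
/- The operator γ_e = δ_en ∘ ε_ne is an (algebraic) opening on edge weights: it is increasing (e ≤ e' on adjacent pairs implies γ_e e ≤ γ_e e' on adjacent pairs), anti-extensive ((γ_e e) i j ≤ e i j for all adjacent i, j), and idempotent ((γ_e (γ_e e)) i j = (γ_e e) i j for all adjacent i, j). -/
/-- The erosion from edge weights to node weights:
`(ε_ne e) i` is the minimum of `e i j` over the neighbors `j` of `i`. -/
noncomputable def epsNE {V : Type*} [Fintype V] (G : SimpleGraph V) [DecidableRel G.Adj]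
    (h : ∀ i : V, ∃ j, G.Adj i j) (e : V → V → ℝ) (i : V) : ℝ :=
  (G.neighborFinset i).inf'
    ⟨(h i).choose, by rw [SimpleGraph.mem_neighborFinset]; exact (h i).choose_spec⟩
    (fun j => e i j)

/-- The opening `γ_e = δ_en ∘ ε_ne` on edge weights:
`(γ_e e) i j = max ((ε_ne e) i) ((ε_ne e) j)`. -/
noncomputable def gammaE {V : Type*} [Fintype V] (G : SimpleGraph V) [DecidableRel G.Adj]
    (h : ∀ i : V, ∃ j, G.Adj i j) (e : V → V → ℝ) (i j : V) : ℝ :=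
  max (epsNE G h e i) (epsNE G h e j)

/-!
Idempotence rests on the identity `ε ∘ γ = ε` (with `ε = epsNE`, `γ = gammaE`): `γ e ≤ e` on
edges gives `ε (γ e) ≤ ε e`, while each `(γ e) i j = max (ε e i) (ε e j)` dominates `ε e i`.
-/

section

open SimpleGraph

variable {V : Type*} [Fintype V] (G : SimpleGraph V) [DecidableRel G.Adj]
  (h : ∀ i : V, ∃ j, G.Adj i j)

lemma epsNE_le_of_adj {e : V → V → ℝ} {i j : V} (hij : G.Adj i j) :
    epsNE G h e i ≤ e i j :=
  Finset.inf'_le _ ((mem_neighborFinset G i j).2 hij)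

lemma le_epsNE {e : V → V → ℝ} {i : V} {a : ℝ} (ha : ∀ j, G.Adj i j → a ≤ e i j) :
    a ≤ epsNE G h e i :=
  Finset.le_inf' _ _ fun j hj => ha j ((mem_neighborFinset G i j).1 hj)

lemma epsNE_mono {e e' : V → V → ℝ} (he : ∀ i j, G.Adj i j → e i j ≤ e' i j) (i : V) :
    epsNE G h e i ≤ epsNE G h e' i :=
  le_epsNE G h fun j hij => (epsNE_le_of_adj G h hij).trans (he i j hij)

lemma gammaE_mono {e e' : V → V → ℝ} (he : ∀ i j, G.Adj i j → e i j ≤ e' i j) (i j : V) :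
    gammaE G h e i j ≤ gammaE G h e' i j :=
  max_le_max (epsNE_mono G h he i) (epsNE_mono G h he j)

lemma gammaE_le_of_adj {e : V → V → ℝ} (hsymm : ∀ i j, G.Adj i j → e i j = e j i)
    {i j : V} (hij : G.Adj i j) : gammaE G h e i j ≤ e i j :=
  max_le (epsNE_le_of_adj G h hij) (hsymm i j hij ▸ epsNE_le_of_adj G h hij.symm)

lemma epsNE_gammaE {e : V → V → ℝ} (hsymm : ∀ i j, G.Adj i j → e i j = e j i) :
    epsNE G h (gammaE G h e) = epsNE G h e :=
  funext fun i => le_antisymm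
    (epsNE_mono G h (fun _ _ => gammaE_le_of_adj G h hsymm) i)
    (le_epsNE G h fun _ _ => le_max_left _ _)

lemma gammaE_gammaE {e : V → V → ℝ} (hsymm : ∀ i j, G.Adj i j → e i j = e j i) :
    gammaE G h (gammaE G h e) = gammaE G h e := by
  funext i j
  simp only [gammaE, epsNE_gammaE G h hsymm]

end

/-- The operator `γ_e = δ_en ∘ ε_ne` is an algebraic opening on edge weights:
it is increasing, anti-extensive and idempotent (on adjacent pairs). -/
theorem gammaE_is_opening {V : Type*} [Fintype V] (G : SimpleGraph V)
    [DecidableRel G.Adj] (h : ∀ i : V, ∃ j, G.Adj i j) :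
    (∀ e e' : V → V → ℝ, (∀ i j, G.Adj i j → e i j = e j i) →
      (∀ i j, G.Adj i j → e' i j = e' j i) →
      (∀ i j, G.Adj i j → e i j ≤ e' i j) →
      ∀ i j, G.Adj i j → gammaE G h e i j ≤ gammaE G h e' i j) ∧
    (∀ e : V → V → ℝ, (∀ i j, G.Adj i j → e i j = e j i) →
      ∀ i j, G.Adj i j → gammaE G h e i j ≤ e i j) ∧
    (∀ e : V → V → ℝ, (∀ i j, G.Adj i j → e i j = e j i) →
      ∀ i j, G.Adj i j → gammaE G h (gammaE G h e) i j = gammaE G h e i j) :=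
  ⟨fun _ _ _ _ he i j _ => gammaE_mono G h he i j,
    fun _ hsymm _ _ hij => gammaE_le_of_adj G h hsymm hij,
    fun _ hsymm i j _ => congrFun₂ (gammaE_gammaE G h hsymm) i j⟩
end

section
/- In a flooding graph, flooding paths and flooding chains coincide: if (n, e) is a flooding graph on G, then a finite path p_1, …, p_m in G is a flooding path (n p_1 ≥ n p_2 ≥ … ≥ n p_m) if and only if it is a flooding chain (each edge (p_k, p_{k+1}) satisfies e p_k p_{k+1} = (ε_ne e) p_k and the weights e p_k p_{k+1} are non-increasing in k); moreover in that case e p_k p_{k+1} = n p_k for every k. -/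
/-- `(n, e)` is a flooding graph on `G`: each edge carries the maximum of the weights of
its extremities and each node carries the minimum weight of its adjacent edges. -/
def IsFloodingGraph {V : Type*} [Fintype V] (G : SimpleGraph V) [DecidableRel G.Adj]
    (h : ∀ i : V, ∃ j, G.Adj i j) (n : V → ℝ) (e : V → V → ℝ) : Prop :=
  (∀ i j, G.Adj i j → e i j = max (n i) (n j)) ∧ (∀ i, n i = epsNE G h e i)

namespace IsFloodingGraph

variable {V : Type*} [Fintype V] {G : SimpleGraph V} [DecidableRel G.Adj]
  {h : ∀ i : V, ∃ j, G.Adj i j} {n : V → ℝ} {e : V → V → ℝ}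

theorem edge_eq_of_le (hfg : IsFloodingGraph G h n e) {i j : V} (hij : G.Adj i j)
    (hji : n j ≤ n i) : e i j = n i := by
  rw [hfg.1 i j hij, max_eq_left hji]

theorem edge_eq_epsNE_iff (hfg : IsFloodingGraph G h n e) {i j : V} (hij : G.Adj i j) :
    e i j = epsNE G h e i ↔ n j ≤ n i := by
  rw [hfg.1 i j hij, ← hfg.2 i, max_eq_left_iff]

end IsFloodingGraph

/-- In a flooding graph, flooding paths and flooding chains coincide: a finite path
`p 0, …, p m` in `G` has non-increasing node weights iff each of its edges is a lowest
edge of its origin with non-increasing edge weights; moreover in that case each edge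
weight equals the node weight of its origin. -/
theorem floodingGraph_path_iff_chain {V : Type*} [Fintype V] (G : SimpleGraph V)
    [DecidableRel G.Adj] (h : ∀ i : V, ∃ j, G.Adj i j)
    (n : V → ℝ) (e : V → V → ℝ) (hfg : IsFloodingGraph G h n e)
    (m : ℕ) (p : ℕ → V) (hpath : ∀ k < m, G.Adj (p k) (p (k + 1))) :
    ((∀ k < m, n (p (k + 1)) ≤ n (p k)) ↔
      ((∀ k < m, e (p k) (p (k + 1)) = epsNE G h e (p k)) ∧
       (∀ k, k + 1 < m → e (p (k + 1)) (p (k + 2)) ≤ e (p k) (p (k + 1))))) ∧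
    ((∀ k < m, n (p (k + 1)) ≤ n (p k)) →
      ∀ k < m, e (p k) (p (k + 1)) = n (p k)) := by
  have edge_eq_node (hmono : ∀ k < m, n (p (k + 1)) ≤ n (p k)) :
      ∀ k < m, e (p k) (p (k + 1)) = n (p k) :=
    fun k hk => hfg.edge_eq_of_le (hpath k hk) (hmono k hk)
  refine ⟨⟨fun hmono => ⟨fun k hk => ?_, fun k hk => ?_⟩, fun ⟨hlowest, _⟩ k hk => ?_⟩,
    edge_eq_node⟩
  · exact (hfg.edge_eq_epsNE_iff (hpath k hk)).2 (hmono k hk)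
  · rw [edge_eq_node hmono k (by omega), edge_eq_node hmono (k + 1) hk]
    exact hmono k (by omega)
  · exact (hfg.edge_eq_epsNE_iff (hpath k hk)).1 (hlowest k hk)
end

section
/- In a flooding graph the catchment basins for node weights and for edge weights are identical: if (n, e) is a flooding graph on G and S ⊆ V, then the set of vertices joined to some vertex of S by a flooding path equals the set of vertices joined to some vertex of S by a flooding chain. -/
/-! Since `e i j = max (n i) (n j)` and `n i = (ε_ne e) i`, an edge `(i, j)` is a lowest edge of
`i` exactly when `n j ≤ n i`, and it then weighs `n i`. Hence a path is a flooding chain iff it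
is a flooding path: the lowest-edge condition is the descent of node weights, and the edge
weights along the path are its node weights. -/

namespace IsFloodingGraph

variable {V : Type*} [Fintype V] {G : SimpleGraph V} [DecidableRel G.Adj]
  {h : ∀ i : V, ∃ j, G.Adj i j} {n : V → ℝ} {e : V → V → ℝ}

theorem edge_eq_left_iff (hfg : IsFloodingGraph G h n e) {i j : V} (hij : G.Adj i j) :
    e i j = n i ↔ n j ≤ n i := by
  rw [hfg.1 i j hij, max_eq_left_iff]

end IsFloodingGraph

/-- In a flooding graph the catchment basins for node weights and for edge weights are
identical: the set of vertices joined to `S` by a flooding path (a path with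
non-increasing node weights) equals the set of vertices joined to `S` by a flooding
chain (a path whose edges are lowest edges of their origins, with non-increasing edge
weights). -/
theorem floodingGraph_basins_eq {V : Type*} [Fintype V] (G : SimpleGraph V)
    [DecidableRel G.Adj] (h : ∀ i : V, ∃ j, G.Adj i j)
    (n : V → ℝ) (e : V → V → ℝ) (hfg : IsFloodingGraph G h n e) (S : Set V) :
    {v : V | ∃ (m : ℕ) (p : ℕ → V), p 0 = v ∧ p m ∈ S ∧
        (∀ k < m, G.Adj (p k) (p (k + 1)) ∧ n (p (k + 1)) ≤ n (p k))} =
    {v : V | ∃ (m : ℕ) (p : ℕ → V), p 0 = v ∧ p m ∈ S ∧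
        (∀ k < m, G.Adj (p k) (p (k + 1)) ∧ e (p k) (p (k + 1)) = epsNE G h e (p k)) ∧
        (∀ k, k + 1 < m → e (p (k + 1)) (p (k + 2)) ≤ e (p k) (p (k + 1)))} := by
  ext v
  constructor
  · rintro ⟨m, p, hp0, hpS, hdesc⟩
    have hedge : ∀ k < m, e (p k) (p (k + 1)) = n (p k) := fun k hk =>
      (hfg.edge_eq_left_iff (hdesc k hk).1).2 (hdesc k hk).2
    refine ⟨m, p, hp0, hpS, fun k hk => ⟨(hdesc k hk).1, ?_⟩, fun k hk => ?_⟩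
    · exact (hfg.edge_eq_epsNE_iff (hdesc k hk).1).2 (hdesc k hk).2
    · rw [hedge k (by omega), hedge (k + 1) hk]
      exact (hdesc k (by omega)).2
  · rintro ⟨m, p, hp0, hpS, hlowest, -⟩
    exact ⟨m, p, hp0, hpS, fun k hk =>
      ⟨(hlowest k hk).1, (hfg.edge_eq_epsNE_iff (hlowest k hk).1).1 (hlowest k hk).2⟩⟩
end

section
/- Catchment basins of increasing lexicographic depth are nested: define the depth-k catchment basin of a set S ⊆ V as the set of vertices p for which there exists a k-steepest non-ascending infinite walk π from p with π t ∈ S for some t. Then for all natural numbers k ≤ l, the depth-l catchment basin of S is contained in the depth-k catchment basin of S. -/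
/-- `π` is a non-ascending infinite walk from `p` in `(G, n)`. -/
def NAWalk {V : Type*} (G : SimpleGraph V) (n : V → ℝ) (p : V) (π : ℕ → V) : Prop :=
  π 0 = p ∧ ∀ t, (π (t + 1) = π t ∨ G.Adj (π t) (π (t + 1))) ∧ n (π (t + 1)) ≤ n (π t)

/-- `π ⪯^k χ`: lexicographic comparison of the first `k` node weights. -/
def lexLE {V : Type*} (n : V → ℝ) (k : ℕ) (π χ : ℕ → V) : Prop :=
  (∀ t < k, n (π t) = n (χ t)) ∨
  ∃ t < k, (∀ s < t, n (π s) = n (χ s)) ∧ n (π t) < n (χ t)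

/-- The depth-`k` catchment basin of `S`: the vertices `p` from which some `k`-steepest
non-ascending infinite walk reaches `S`. -/
def basin {V : Type*} (G : SimpleGraph V) (n : V → ℝ) (k : ℕ) (S : Set V) : Set V :=
  {p : V | ∃ π : ℕ → V, NAWalk G n p π ∧
    (∀ χ : ℕ → V, NAWalk G n p χ → lexLE n k π χ) ∧ ∃ t, π t ∈ S}

theorem lexLE.mono {V : Type*} {n : V → ℝ} {k l : ℕ} {π χ : ℕ → V} (hkl : k ≤ l)
    (h : lexLE n l π χ) : lexLE n k π χ := by
  rcases h with h_eq | ⟨u, -, h_eq, h_lt⟩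
  · exact Or.inl fun s hs => h_eq s (hs.trans_le hkl)
  · rcases lt_or_ge u k with huk | hku
    · exact Or.inr ⟨u, huk, h_eq, h_lt⟩
    · exact Or.inl fun s hs => h_eq s (hs.trans_le hku)

theorem basins_nested_general {V : Type*} (G : SimpleGraph V)
    (n : V → ℝ) (S : Set V)
    (k l : ℕ) (hkl : k ≤ l) :
    basin G n l S ⊆ basin G n k S := by
  rintro p ⟨π, hπ, h_steepest, h_reach⟩
  exact ⟨π, hπ, fun χ hχ => (h_steepest χ hχ).mono hkl, h_reach⟩

/-- Catchment basins of increasing lexicographic depth are nested: for `k ≤ l`, the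
depth-`l` catchment basin of `S` is contained in the depth-`k` catchment basin of `S`. -/
theorem basins_nested {V : Type*} [Fintype V] (G : SimpleGraph V)
    (h : ∀ i : V, ∃ j, G.Adj i j) (n : V → ℝ) (S : Set V)
    (k l : ℕ) (hkl : k ≤ l) :
    basin G n l S ⊆ basin G n k S :=
  basins_nested_general G n S k l hkl
end

section
/- A suffix of a steepest walk is steepest: if π is a non-ascending infinite walk such that π ⪯ χ for every non-ascending infinite walk χ from π 0, then for every l ∈ ℕ the shifted walk π_l defined by π_l t = π (t + l) satisfies π_l ⪯ σ for every non-ascending infinite walk σ from π l. -/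
/-- `π ⪯ χ`: `π ⪯^k χ` for every depth `k`. -/
def lexLEInf {V : Type*} (n : V → ℝ) (π χ : ℕ → V) : Prop :=
  ∀ k : ℕ, lexLE n k π χ

/-!
Concatenating the first `l` steps of `π` with any non-ascending walk `σ` from `π l` gives a
non-ascending walk from `π 0`, which `π` lexicographically precedes. The two walks share their
first `l` weights, so the comparison at depth `l + k` is decided on the suffixes and yields
`π_l ⪯^k σ`.
-/

namespace NAWalk

variable {V : Type*}

def splice (π σ : ℕ → V) (l : ℕ) : ℕ → V := fun t => if t < l then π t else σ (t - l)

theorem splice_add (π σ : ℕ → V) (l s : ℕ) : splice π σ l (s + l) = σ s := by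
  simp [splice]

theorem splice_of_le {π σ : ℕ → V} {l t : ℕ} (hσ : σ 0 = π l) (ht : t ≤ l) :
    splice π σ l t = π t := by
  rcases ht.lt_or_eq with ht | rfl
  · simp [splice, ht]
  · simp [splice, hσ]

theorem splice_walk {G : SimpleGraph V} {n : V → ℝ} {p : V} {π σ : ℕ → V} {l : ℕ}
    (hπ : NAWalk G n p π) (hσ : NAWalk G n (π l) σ) : NAWalk G n p (splice π σ l) := by
  refine ⟨?_, fun t => ?_⟩
  · rw [splice_of_le hσ.1 (Nat.zero_le l), hπ.1]
  · rcases le_or_gt (t + 1) l with ht | ht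
    · rw [splice_of_le hσ.1 ht, splice_of_le hσ.1 (by omega)]
      exact hπ.2 t
    · obtain ⟨s, rfl⟩ : ∃ s, t = s + l := ⟨t - l, by omega⟩
      rw [show s + l + 1 = (s + 1) + l by omega, splice_add, splice_add]
      exact hσ.2 s

end NAWalk

theorem lexLE_shift {V : Type*} {n : V → ℝ} {π χ : ℕ → V} {l k : ℕ}
    (hpre : ∀ t < l, n (π t) = n (χ t)) (h : lexLE n (l + k) π χ) :
    lexLE n k (fun t => π (t + l)) (fun t => χ (t + l)) := by
  rcases h with heq | ⟨t, ht, heq, hlt⟩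
  · exact Or.inl fun s hs => heq (s + l) (by omega)
  · rcases lt_or_ge t l with htl | htl
    · exact absurd (hpre t htl) hlt.ne
    · refine Or.inr ⟨t - l, by omega, fun s hs => heq (s + l) (by omega), ?_⟩
      simpa only [Nat.sub_add_cancel htl] using hlt

theorem steepest_suffix_general {V : Type*} (G : SimpleGraph V)
    (n : V → ℝ) (π : ℕ → V)
    (hπ : NAWalk G n (π 0) π)
    (hsteep : ∀ χ : ℕ → V, NAWalk G n (π 0) χ → lexLEInf n π χ) (l : ℕ) :
    ∀ σ : ℕ → V, NAWalk G n (π l) σ → lexLEInf n (fun t => π (t + l)) σ := by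
  intro σ hσ k
  have hprefix : ∀ t < l, n (π t) = n (NAWalk.splice π σ l t) := fun t ht => by
    rw [NAWalk.splice_of_le hσ.1 ht.le]
  have hcmp := lexLE_shift hprefix (hsteep _ (hπ.splice_walk hσ) (l + k))
  simpa only [NAWalk.splice_add] using hcmp

/-- A suffix of a steepest walk is steepest: if `π` is a non-ascending infinite walk
with `π ⪯ χ` for every non-ascending infinite walk `χ` from `π 0`, then for every `l`
the shifted walk `t ↦ π (t + l)` satisfies `π_l ⪯ σ` for every non-ascending infinite
walk `σ` from `π l`. -/
theorem steepest_suffix {V : Type*} [Fintype V] (G : SimpleGraph V)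
    (h : ∀ i : V, ∃ j, G.Adj i j) (n : V → ℝ) (π : ℕ → V)
    (hπ : NAWalk G n (π 0) π)
    (hsteep : ∀ χ : ℕ → V, NAWalk G n (π 0) χ → lexLEInf n π χ) (l : ℕ) :
    ∀ σ : ℕ → V, NAWalk G n (π l) σ → lexLEInf n (fun t => π (t + l)) σ :=
  steepest_suffix_general G n π hπ hsteep l
end

section
/- Any oriented path of length k in the depth-k pruned graph is of maximal steepness for the depth-k lexicographic order: if p_0, p_1, …, p_k are vertices such that (p_i, p_{i+1}) ∈ ↓^k for every i < k, then for every non-ascending infinite walk χ from p_0, the k-tuple (n p_0, n p_1, …, n p_{k−1}) is less than or equal to (n (χ 0), n (χ 1), …, n (χ (k−1))) in the lexicographic order. -/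
/-- The depth-`k` pruned arrow set `↓^k`: the pairs `(p, q)` such that some `k`-steepest
non-ascending infinite walk from `p` has `q` as its second vertex. -/
def prunedArrows {V : Type*} (G : SimpleGraph V) (n : V → ℝ) (k : ℕ) : Set (V × V) :=
  {pq : V × V | ∃ π : ℕ → V, NAWalk G n pq.1 π ∧ π 1 = pq.2 ∧
    ∀ χ : ℕ → V, NAWalk G n pq.1 χ → lexLE n k π χ}

/-!
Induction along the path. The arrow `(p 0, p 1)` is witnessed by a `k`-steepest walk `π`
through `p 1`; the tail of `π` is a non-ascending walk from `p 1`, so by induction the tail of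
`p` is lexicographically below it. Prepending the common first weight `n (p 0)` gives `p ⪯ π`,
and `π ⪯ χ` by steepness, so `p ⪯ χ` by transitivity.
-/

section

variable {V : Type*} {n : V → ℝ} {a b c : ℕ → V}

lemma lexLE.of_le {m k : ℕ} (h : m ≤ k) (hab : lexLE n k a b) : lexLE n m a b := by
  rcases hab with heq | ⟨t, ht, heq, hlt⟩
  · exact Or.inl fun s hs => heq s (hs.trans_le h)
  · by_cases htm : t < m
    · exact Or.inr ⟨t, htm, heq, hlt⟩
    · exact Or.inl fun s hs => heq s (hs.trans_le (not_lt.mp htm))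

lemma lexLE.trans {k : ℕ} (hab : lexLE n k a b) (hbc : lexLE n k b c) : lexLE n k a c := by
  rcases hab with e₁ | ⟨t₁, ht₁, e₁, l₁⟩ <;> rcases hbc with e₂ | ⟨t₂, ht₂, e₂, l₂⟩
  · exact Or.inl fun t ht => (e₁ t ht).trans (e₂ t ht)
  · exact Or.inr ⟨t₂, ht₂, fun s hs => (e₁ s (hs.trans ht₂)).trans (e₂ s hs),
      (e₁ t₂ ht₂).trans_lt l₂⟩
  · exact Or.inr ⟨t₁, ht₁, fun s hs => (e₁ s hs).trans (e₂ s (hs.trans ht₁)),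
      l₁.trans_eq (e₂ t₁ ht₁)⟩
  · rcases lt_trichotomy t₁ t₂ with hlt | rfl | hgt
    · exact Or.inr ⟨t₁, ht₁, fun s hs => (e₁ s hs).trans (e₂ s (hs.trans hlt)),
        l₁.trans_eq (e₂ t₁ hlt)⟩
    · exact Or.inr ⟨t₁, ht₁, fun s hs => (e₁ s hs).trans (e₂ s hs), l₁.trans l₂⟩
    · exact Or.inr ⟨t₂, ht₂, fun s hs => (e₁ s (hs.trans hgt)).trans (e₂ s hs),
        (e₁ t₂ hgt).trans_lt l₂⟩

lemma lexLE_succ {k : ℕ} (h₀ : n (a 0) = n (b 0))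
    (h : lexLE n k (fun t => a (t + 1)) (fun t => b (t + 1))) : lexLE n (k + 1) a b := by
  rcases h with heq | ⟨t, ht, heq, hlt⟩
  · refine Or.inl fun s hs => ?_
    cases s with
    | zero => exact h₀
    | succ s => exact heq s (Nat.succ_lt_succ_iff.mp hs)
  · refine Or.inr ⟨t + 1, Nat.succ_lt_succ ht, fun s hs => ?_, hlt⟩
    cases s with
    | zero => exact h₀
    | succ s => exact heq s (Nat.succ_lt_succ_iff.mp hs)

lemma NAWalk.tail {G : SimpleGraph V} {p : V} {π : ℕ → V} (hπ : NAWalk G n p π) :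
    NAWalk G n (π 1) (fun t => π (t + 1)) :=
  ⟨rfl, fun t => hπ.2 (t + 1)⟩

theorem lexLE_of_forall_mem_prunedArrows {G : SimpleGraph V} {j k : ℕ} (hjk : j ≤ k)
    (p : ℕ → V) (hp : ∀ i < j, (p i, p (i + 1)) ∈ prunedArrows G n k) {χ : ℕ → V}
    (hχ : NAWalk G n (p 0) χ) : lexLE n j p χ := by
  induction j generalizing p χ with
  | zero => exact Or.inl fun t ht => absurd ht (Nat.not_lt_zero t)
  | succ j ih =>
    obtain ⟨π, hπ, hπ₁ : π 1 = p 1, hsteep⟩ := hp 0 j.succ_pos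
    have htail : lexLE n j (fun t => p (t + 1)) (fun t => π (t + 1)) :=
      ih (by omega) _ (fun i hi => hp (i + 1) (by omega)) (hπ₁ ▸ hπ.tail)
    exact (lexLE_succ (congrArg n hπ.1.symm) htail).trans ((hsteep χ hχ).of_le hjk)

end

theorem prunedPath_maximal_steepness_general {V : Type*} (G : SimpleGraph V)
    (n : V → ℝ) (k : ℕ) (p : ℕ → V)
    (hp : ∀ i < k, (p i, p (i + 1)) ∈ prunedArrows G n k) :
    ∀ χ : ℕ → V, NAWalk G n (p 0) χ → lexLE n k p χ :=
  fun _ hχ => lexLE_of_forall_mem_prunedArrows le_rfl p hp hχ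

/-- Any oriented path of length `k` in the depth-`k` pruned graph is of maximal
steepness for the depth-`k` lexicographic order: if each consecutive pair of
`p 0, p 1, …, p k` lies in `↓^k`, then `(n (p 0), …, n (p (k−1)))` is lexicographically
less than or equal to `(n (χ 0), …, n (χ (k−1)))` for every non-ascending infinite walk
`χ` from `p 0`. -/
theorem prunedPath_maximal_steepness {V : Type*} [Fintype V] (G : SimpleGraph V)
    (h : ∀ i : V, ∃ j, G.Adj i j) (n : V → ℝ) (k : ℕ) (p : ℕ → V)
    (hp : ∀ i < k, (p i, p (i + 1)) ∈ prunedArrows G n k) :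
    ∀ χ : ℕ → V, NAWalk G n (p 0) χ → lexLE n k p χ :=
  prunedPath_maximal_steepness_general G n k p hp
end
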